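/- Let Λ be a finite-dimensional algebra over a field k, E/k a field extension, and M a finite-dimensional left Λ-module. Then M is an injective Λ-module if and only if M ⊗_k E is an injective Λ ⊗_k E-module. -/

import Mathlib

/-!
For an `E`-vector space `V`, the module `Hom_k(Λ, V)`, on which `Λ` acts through right
multiplication in the source and `E` through `V`, is an injective `Λ ⊗ E`-module: evaluation at `1`
identifies `Λ ⊗ E`-linear maps into it with `E`-linear maps into `V`. If `M` is injective, the
unit `M → Hom_k(Λ, M)` splits; tensoring with `E` and using `Hom_k(Λ, M) ⊗ E ≅ Hom_k(Λ, M ⊗ E)`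
(here `Λ` is finite-dimensional) makes `M ⊗ E` a direct summand of an injective `Λ ⊗ E`-module.

Conversely, tensoring with `E` is exact over `k`, so an extension problem for `M` along an
injection of `Λ`-modules becomes one for `M ⊗ E`, which is solvable over `Λ ⊗ E`; a `k`-linear
retraction `E → k` of `k → E` brings the solution back to `M`.
-/

open TensorProduct

variable (k E L M : Type) [Field k] [Field E] [Algebra k E] [Ring L] [Algebra k L]
  [AddCommGroup M] [Module k M] [Module L M] [IsScalarTower k L M] [SMulCommClass k L M]

/-- The action of `E` on `M ⊗[k] E` through the right-hand tensor factor, as a ring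
homomorphism to `k`-linear endomorphisms. -/
noncomputable def rho : E →+* Module.End k (M ⊗[k] E) where
  toFun e := LinearMap.lTensor M (LinearMap.mulLeft k e)
  map_one' := by ext x y; simp
  map_mul' e₁ e₂ := by ext x y; simp [Module.End.mul_apply]
  map_zero' := by ext x y; simp
  map_add' e₁ e₂ := by ext x y; simp [add_mul, tmul_add]

/-- `M ⊗[k] E` is an `E`-module via the right-hand tensor factor. -/
noncomputable instance eMod : Module E (M ⊗[k] E) := Module.compHom _ (rho k E M)

lemma eMod_smul_tmul (e : E) (m : M) (y : E) :
    e • (m ⊗ₜ[k] y) = m ⊗ₜ[k] (e * y) := rfl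

instance : IsScalarTower k E (M ⊗[k] E) := by
  constructor
  intro c e x
  induction x using TensorProduct.induction_on with
  | zero => simp
  | tmul m y => rw [eMod_smul_tmul, eMod_smul_tmul, smul_mul_assoc, ← tmul_smul]
  | add x y hx hy => simp [smul_add, hx, hy]

instance : SMulCommClass L E (M ⊗[k] E) := by
  constructor
  intro a e x
  induction x using TensorProduct.induction_on with
  | zero => simp
  | tmul m y => rw [eMod_smul_tmul, smul_tmul', smul_tmul', eMod_smul_tmul]
  | add x y hx hy => simp [smul_add, hx, hy]

/-- The natural `L ⊗[k] E`-module structure on `M ⊗[k] E`, for `M` a module over the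
`k`-algebra `L` and `E/k` a field extension. -/
noncomputable instance bigMod : Module (L ⊗[k] E) (M ⊗[k] E) := TensorProduct.Algebra.module

universe u v

theorem Module.Injective.of_leftInverse {R : Type*} {Q Q' : Type v} [Ring R] [AddCommGroup Q]
    [AddCommGroup Q'] [Module R Q] [Module R Q'] [Module.Injective R Q'] (i : Q →ₗ[R] Q')
    (r : Q' →ₗ[R] Q) (hri : Function.LeftInverse r i) : Module.Injective R Q where
  out _ _ _ _ _ _ f hf g := by
    obtain ⟨h, hh⟩ := Module.Injective.out f hf (i ∘ₗ g)
    exact ⟨r ∘ₗ h, fun x => by simp [hh, hri _]⟩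

section TensorAlgebraModule

attribute [local instance] TensorProduct.Algebra.module

variable {R A B P N : Type*} [CommSemiring R] [Semiring A] [Semiring B] [Algebra R A]
  [Algebra R B] [AddCommMonoid P] [Module R P] [Module A P] [Module B P] [IsScalarTower R A P]
  [IsScalarTower R B P] [SMulCommClass A B P] [AddCommMonoid N] [Module R N] [Module A N]
  [Module B N] [IsScalarTower R A N] [IsScalarTower R B N] [SMulCommClass A B N]

theorem LinearMap.map_tensorProduct_smul (f : P →ₗ[R] N) (hA : ∀ (a : A) p, f (a • p) = a • f p)
    (hB : ∀ (b : B) p, f (b • p) = b • f p) (w : A ⊗[R] B) (p : P) : f (w • p) = w • f p := by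
  induction w using TensorProduct.induction_on with
  | zero => simp
  | tmul a b => simp only [TensorProduct.Algebra.smul_def, hA, hB]
  | add w₁ w₂ h₁ h₂ => simp only [add_smul, map_add, h₁, h₂]

end TensorAlgebraModule

/-- `Hom_R(A, V)`, with `A` acting through right multiplication on the source (rather than
through `V`, as `LinearMap.module` would). -/
def Coind (R A V : Type u) [CommRing R] [Ring A] [Algebra R A] [AddCommGroup V] [Module R V] :
    Type u :=
  A →ₗ[R] V

namespace Coind

variable {R A V : Type u} [CommRing R] [Ring A] [Algebra R A] [AddCommGroup V] [Module R V]

instance : AddCommGroup (Coind R A V) := inferInstanceAs (AddCommGroup (A →ₗ[R] V))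

instance : FunLike (Coind R A V) A V := inferInstanceAs (FunLike (A →ₗ[R] V) A V)

instance : LinearMapClass (Coind R A V) R A V :=
  inferInstanceAs (LinearMapClass (A →ₗ[R] V) R A V)

def ofLinearMap (f : A →ₗ[R] V) : Coind R A V := f

@[simp] theorem ofLinearMap_apply (f : A →ₗ[R] V) (x : A) : ofLinearMap f x = f x := rfl

@[ext] theorem ext {f g : Coind R A V} (h : ∀ x, f x = g x) : f = g := DFunLike.ext _ _ h

@[simp] theorem zero_apply (x : A) : (0 : Coind R A V) x = 0 := rfl

@[simp] theorem add_apply (f g : Coind R A V) (x : A) : (f + g) x = f x + g x := rfl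

section PointwiseAction

variable {S : Type*} [Semiring S] [Module S V] [SMulCommClass R S V]

instance : Module S (Coind R A V) := inferInstanceAs (Module S (A →ₗ[R] V))

@[simp] theorem smul_apply' (s : S) (f : Coind R A V) (x : A) : (s • f) x = s • f x := rfl

instance [SMul R S] [IsScalarTower R S V] : IsScalarTower R S (Coind R A V) :=
  inferInstanceAs (IsScalarTower R S (A →ₗ[R] V))

end PointwiseAction

instance : SMul A (Coind R A V) where
  smul a f := (f : A →ₗ[R] V) ∘ₗ LinearMap.mulRight R a

@[simp] theorem smul_apply (a : A) (f : Coind R A V) (x : A) : (a • f) x = f (x * a) := rfl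

instance : Module A (Coind R A V) where
  one_smul f := by ext; simp
  mul_smul a b f := by ext; simp [mul_assoc]
  smul_zero a := by ext; simp
  smul_add a f g := by ext; simp
  add_smul a b f := by ext; simp [mul_add]
  zero_smul f := by ext; simp

instance : IsScalarTower R A (Coind R A V) where
  smul_assoc r a f := by ext; simp

instance {S : Type*} [Semiring S] [Module S V] [SMulCommClass R S V] :
    SMulCommClass A S (Coind R A V) where
  smul_comm a s f := by ext; simp

variable (R A) in
def unit (M : Type u) [AddCommGroup M] [Module R M] [Module A M] [IsScalarTower R A M] :
    M →ₗ[A] Coind R A M where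
  toFun m := ofLinearMap
    { toFun := fun x => x • m
      map_add' := fun x y => add_smul x y m
      map_smul' := fun r x => smul_assoc r x m }
  map_add' m n := by ext; simp
  map_smul' a m := by ext; simp [mul_smul]

variable (R A) in
theorem unit_injective (M : Type u) [AddCommGroup M] [Module R M] [Module A M]
    [IsScalarTower R A M] : Function.Injective (unit R A M) := fun m n h => by
  simpa [unit] using congr($h 1)

variable {S : Type u} [CommRing S] [Algebra R S] [Module S V] [IsScalarTower R S V]

instance : Module (A ⊗[R] S) (Coind R A V) := TensorProduct.Algebra.module

@[simp] theorem tmul_smul_apply (a : A) (s : S) (f : Coind R A V) (x : A) :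
    ((a ⊗ₜ[R] s) • f) x = s • f (x * a) := rfl

variable {Y : Type*} [AddCommGroup Y] [Module (A ⊗[R] S) Y]

def lift (φ : Y →+ V) (hφ : ∀ (s : S) y, φ (((1 : A) ⊗ₜ[R] s) • y) = s • φ y) :
    Y →ₗ[A ⊗[R] S] Coind R A V where
  toFun y := ofLinearMap
    { toFun := fun a => φ ((a ⊗ₜ[R] (1 : S)) • y)
      map_add' := fun a b => by simp [add_tmul, add_smul]
      map_smul' := fun r a => by
        have : (r • a) ⊗ₜ[R] (1 : S) = ((1 : A) ⊗ₜ[R] algebraMap R S r) * (a ⊗ₜ[R] 1) := by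
          rw [Algebra.TensorProduct.tmul_mul_tmul, one_mul, mul_one, smul_tmul,
            Algebra.algebraMap_eq_smul_one]
        simp only [this, mul_smul, hφ, algebraMap_smul, RingHom.id_apply] }
  map_add' y z := by ext; simp
  map_smul' w y := by
    ext x
    induction w using TensorProduct.induction_on with
    | zero => simp
    | tmul a s =>
      have : x ⊗ₜ[R] (1 : S) * a ⊗ₜ[R] s = ((1 : A) ⊗ₜ[R] s) * ((x * a) ⊗ₜ[R] 1) := by
        simp [Algebra.TensorProduct.tmul_mul_tmul]
      show φ ((x ⊗ₜ[R] (1 : S)) • (a ⊗ₜ[R] s) • y) = s • φ (((x * a) ⊗ₜ[R] (1 : S)) • y)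
      rw [← mul_smul, this, mul_smul, hφ]
    | add w₁ w₂ h₁ h₂ => simp_all [add_smul]

theorem injective [Module.Injective S V] : Module.Injective (A ⊗[R] S) (Coind R A V) where
  out X Y _ _ _ _ f hf g := by
    let ι : S →+* A ⊗[R] S := Algebra.TensorProduct.includeRight.toRingHom
    let _ : Module S X := Module.compHom X ι
    let _ : Module S Y := Module.compHom Y ι
    let fS : X →ₗ[S] Y := { f.toAddMonoidHom with map_smul' := fun s x => f.map_smul (ι s) x }
    let gS : X →ₗ[S] V :=
      { toFun := fun x => g x 1
        map_add' := fun x y => by simp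
        map_smul' := fun s x => by
          show g (((1 : A) ⊗ₜ[R] s) • x) 1 = s • g x 1
          simp }
    obtain ⟨hS, hhS⟩ := Module.Injective.out fS hf gS
    refine ⟨lift hS.toAddMonoidHom hS.map_smul, fun x => ?_⟩
    ext a
    show hS ((a ⊗ₜ[R] (1 : S)) • f x) = g x a
    rw [← f.map_smul]
    refine (hhS _).trans ?_
    show g ((a ⊗ₜ[R] (1 : S)) • x) 1 = g x a
    rw [map_smul, tmul_smul_apply, one_smul, one_mul]

end Coind

instance : IsScalarTower L (L ⊗[k] E) (M ⊗[k] E) where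
  smul_assoc l w z := by
    induction w using TensorProduct.induction_on with
    | zero => simp
    | tmul l' e => simp only [smul_tmul', smul_eq_mul, TensorProduct.Algebra.smul_def, mul_smul]
    | add w₁ w₂ h₁ h₂ => simp only [smul_add, add_smul, h₁, h₂]

section BaseChange

variable {k E L M} {N : Type} [AddCommGroup N] [Module k N] [Module L N] [IsScalarTower k L N]
  [SMulCommClass k L N]

theorem LinearMap.rTensor_eMod_smul (f : M →ₗ[k] N) (e : E) (z : M ⊗[k] E) :
    f.rTensor E (e • z) = e • f.rTensor E z := by
  induction z using TensorProduct.induction_on with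
  | zero => simp
  | tmul m e' => rfl
  | add z₁ z₂ h₁ h₂ => simp only [smul_add, map_add, h₁, h₂]

variable (k E) in
def LinearMap.baseChangeRight (f : M →ₗ[L] N) : M ⊗[k] E →ₗ[L ⊗[k] E] N ⊗[k] E where
  toFun := (f.restrictScalars k).rTensor E
  map_add' := map_add _
  map_smul' := LinearMap.map_tensorProduct_smul _
    (TensorProduct.AlgebraTensorModule.rTensor k E f).map_smul (LinearMap.rTensor_eMod_smul _)

@[simp] theorem LinearMap.baseChangeRight_tmul (f : M →ₗ[L] N) (m : M) (e : E) :
    f.baseChangeRight k E (m ⊗ₜ[k] e) = f m ⊗ₜ[k] e := rfl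

variable (k E L M) in
noncomputable def Coind.tensorEquiv [FiniteDimensional k L] :
    Coind k L M ⊗[k] E ≃ₗ[L ⊗[k] E] Coind k L (M ⊗[k] E) where
  __ := rTensorHomEquivHomRTensor k L M E
  map_smul' := by
    let Ψ : Coind k L M ⊗[k] E →ₗ[k] Coind k L (M ⊗[k] E) :=
      (rTensorHomEquivHomRTensor k L M E).toLinearMap
    have hΨ (φ : Coind k L M) (e : E) (x : L) : Ψ (φ ⊗ₜ e) x = φ x ⊗ₜ e :=
      congr($(rTensorHomEquivHomRTensor_apply (φ ⊗ₜ[k] e)) x)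
    refine Ψ.map_tensorProduct_smul (fun l z => ?_) (fun e z => ?_)
    all_goals
      induction z using TensorProduct.induction_on with
      | zero => simp
      | tmul φ e' =>
        ext x
        simp only [hΨ, smul_tmul', Coind.smul_apply, eMod_smul_tmul, Coind.smul_apply']
      | add z₁ z₂ h₁ h₂ => simp only [smul_add, map_add, h₁, h₂]

variable (k E) in
theorem LinearMap.baseChangeRight_leftInverse {f : M →ₗ[L] N} {g : N →ₗ[L] M}
    (h : Function.LeftInverse g f) :
    Function.LeftInverse (g.baseChangeRight k E) (f.baseChangeRight k E) := fun z => by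
  induction z using TensorProduct.induction_on with
  | zero => simp
  | tmul m e => simp [h m]
  | add z₁ z₂ h₁ h₂ => simp only [map_add, h₁, h₂]

variable (k E L M) in
theorem injective_tensor_of_injective [FiniteDimensional k L] (hM : Module.Injective L M) :
    Module.Injective (L ⊗[k] E) (M ⊗[k] E) := by
  obtain ⟨r, hr⟩ := hM.out (Coind.unit k L M) (Coind.unit_injective k L M) LinearMap.id
  have : Module.Injective E (M ⊗[k] E) := Module.injective_of_isSemisimpleRing E _
  have : Module.Injective (L ⊗[k] E) (Coind k L (M ⊗[k] E)) := Coind.injective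
  have : Module.Injective (L ⊗[k] E) (Coind k L M ⊗[k] E) :=
    .of_leftInverse (Coind.tensorEquiv k E L M).toLinearMap
      (Coind.tensorEquiv k E L M).symm.toLinearMap (Coind.tensorEquiv k E L M).left_inv
  exact .of_leftInverse _ _ (LinearMap.baseChangeRight_leftInverse k E (f := Coind.unit k L M) hr)

variable {P : Type} [AddCommGroup P] [Module k P] [Module L P] [IsScalarTower k L P]
  [SMulCommClass k L P]

theorem exists_extension_of_injective_tensor (hM : Module.Injective (L ⊗[k] E) (M ⊗[k] E))
    (f : N →ₗ[L] P) (hf : Function.Injective f) (g : N →ₗ[L] M) :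
    ∃ g' : P →ₗ[L] M, g' ∘ₗ f = g := by
  obtain ⟨π, hπ⟩ := (Algebra.linearMap k E).exists_leftInverse_of_injective
    (LinearMap.ker_eq_bot.mpr (algebraMap k E).injective)
  have hπ1 : π 1 = 1 := by simpa using congr($hπ 1)
  let p : M ⊗[k] E →ₗ[L] M :=
    TensorProduct.AlgebraTensorModule.rid k L M ∘ₗ TensorProduct.AlgebraTensorModule.lTensor L M π
  let inc : P →ₗ[L] P ⊗[k] E := (TensorProduct.AlgebraTensorModule.mk k L P E).flip 1
  have hfE : Function.Injective (f.baseChangeRight k E) :=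
    Module.Flat.rTensor_preserves_injective_linearMap (f.restrictScalars k) hf
  obtain ⟨h, hh⟩ := hM.out (f.baseChangeRight k E) hfE (g.baseChangeRight k E)
  refine ⟨p ∘ₗ h.restrictScalars L ∘ₗ inc, LinearMap.ext fun x => ?_⟩
  have hx : h (f x ⊗ₜ 1) = g x ⊗ₜ 1 := hh (x ⊗ₜ 1)
  simp [p, inc, hx, hπ1]

variable (k E L M) in
theorem injective_of_injective_tensor (hM : Module.Injective (L ⊗[k] E) (M ⊗[k] E)) :
    Module.Injective L M :=
  Module.Baer.injective fun I g => by
    obtain ⟨g', hg'⟩ := exists_extension_of_injective_tensor hM I.subtype Subtype.val_injective g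
    exact ⟨g', fun x hx => congr($hg' ⟨x, hx⟩)⟩

end BaseChange

theorem injective_iff_injective_tensor [FiniteDimensional k L] :
    Module.Injective L M ↔ Module.Injective (L ⊗[k] E) (M ⊗[k] E) :=
  ⟨injective_tensor_of_injective k E L M, injective_of_injective_tensor k E L M⟩
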